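/- arXiv:2308.00217 — 5 statements merged into one kernel-verified Lean document; each statement's English description precedes it below -/
import Mathlib

section
/- Let G be a group and H a proper subgroup of G. If H is either of finite index in G or normal in G, then G is not equal to the union of the conjugates of H, i.e. there exists an element x ∈ G such that x ∉ gHg⁻¹ for every g ∈ G. -/
/-!
If `H` has finite index, `G` acts transitively on the finite set `G ⧸ H` of size at least two,
and `x` lies in a conjugate `gHg⁻¹` exactly when `x` fixes the coset `gH`. The action factors
through a finite group of permutations, and there Burnside's lemma (average number of fixed
points = number of orbits = 1) together with the identity fixing at least two points forces
some element to fix no point at all. If `H` is normal, every conjugate of `H` is `H` itself.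
-/

namespace MulAction

variable {G X : Type*} [Group G] [MulAction G X]

theorem exists_forall_smul_ne_of_finite [Finite G] [Finite X] [Nontrivial X]
    [IsPretransitive G X] : ∃ g : G, ∀ x : X, g • x ≠ x := by
  classical
  cases nonempty_fintype G
  cases nonempty_fintype X
  by_contra! hfix
  have : Unique (orbitRel.Quotient G X) :=
    ((pretransitive_iff_unique_quotient_of_nonempty G X).mp inferInstance).some
  have hburnside := sum_card_fixedBy_eq_card_orbits_mul_card_group G X
  rw [Fintype.card_unique, one_mul] at hburnside
  have hfixedBy_pos (g : G) : 0 < Fintype.card (fixedBy X g) :=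
    Fintype.card_pos_iff.mpr (let ⟨x, hx⟩ := hfix g; ⟨⟨x, hx⟩⟩)
  have hfixedBy_one : Fintype.card (fixedBy X (1 : G)) = Fintype.card X := by
    simp [fixedBy_one_eq_univ]
  have : Fintype.card G < ∑ g : G, Fintype.card (fixedBy X g) :=
    calc Fintype.card G = ∑ _g : G, 1 := by simp
      _ < ∑ g : G, Fintype.card (fixedBy X g) :=
        Finset.sum_lt_sum (fun g _ => hfixedBy_pos g)
          ⟨1, Finset.mem_univ _, hfixedBy_one ▸ Fintype.one_lt_card⟩
  omega

theorem exists_forall_smul_ne [Finite X] [Nontrivial X] [IsPretransitive G X] :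
    ∃ g : G, ∀ x : X, g • x ≠ x := by
  let Q := (toPermHom G X).range
  have : IsPretransitive Q X :=
    ⟨fun x y => let ⟨g, hg⟩ := exists_smul_eq G x y; ⟨⟨toPermHom G X g, g, rfl⟩, hg⟩⟩
  obtain ⟨⟨_, g, rfl⟩, hg⟩ := exists_forall_smul_ne_of_finite (G := Q) (X := X)
  exact ⟨g, hg⟩

end MulAction

/-- Let `G` be a group and `H` a proper subgroup of `G`. If `H` is either of
finite index in `G` (i.e. the set of left cosets `G ⧸ H` is finite) or normal in `G`, then `G`
is not the union of the conjugates of `H`: there is an `x ∈ G` lying in no conjugate `gHg⁻¹`. -/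
theorem proper_subgroup_conjugates_ne_univ {G : Type*} [Group G] (H : Subgroup G)
    (hH : H ≠ ⊤) (hfin_or_norm : Finite (G ⧸ H) ∨ H.Normal) :
    ∃ x : G, ∀ g : G, ∀ h ∈ H, x ≠ g * h * g⁻¹ := by
  rcases hfin_or_norm with hfin | hnormal
  · have : Nontrivial (G ⧸ H) := QuotientGroup.nontrivial_iff.mpr hH
    obtain ⟨x, hx⟩ := MulAction.exists_forall_smul_ne (G := G) (X := G ⧸ H)
    refine ⟨x, fun g h hh hxgh => hx g ?_⟩
    rw [MulAction.Quotient.smul_mk, QuotientGroup.eq, hxgh]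
    simpa [mul_assoc] using hh
  · obtain ⟨x, hx⟩ := SetLike.exists_not_mem_of_ne_top H hH
    exact ⟨x, fun g h hh hxgh => hx (hxgh ▸ hnormal.conj_mem h hh g)⟩
end

section
/- Let G be a group and H a proper subgroup of finite index in G. Then there exists an element x ∈ G such that x·g·H ≠ g·H for every g ∈ G; that is, the permutation of the left coset space G/H induced by left multiplication by x has no fixed point. -/
/-!
By Burnside's lemma, a finite group acting transitively on a finite set fixes on average exactly
one point. The identity fixes every point, so as soon as there are at least two points some
element fixes none. An arbitrary group acting on the finite set `G ⧸ H` is handled through its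
image in the (finite) permutation group.
-/

open MulAction

theorem MulAction.card_orbitRel_quotient_eq_one {K X : Type*} [Group K] [MulAction K X]
    [Nonempty X] [IsPretransitive K X] : Nat.card (orbitRel.Quotient K X) = 1 := by
  obtain ⟨h⟩ := (pretransitive_iff_unique_quotient_of_nonempty K X).mp inferInstance
  exact Nat.card_unique

theorem MulAction.exists_forall_smul_ne_of_finite_s1 {K X : Type*} [Group K] [Finite K]
    [MulAction K X] [Finite X] [IsPretransitive K X] (hX : 1 < Nat.card X) :
    ∃ k : K, ∀ x : X, k • x ≠ x := by
  classical
  have : Fintype K := Fintype.ofFinite K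
  have : Fintype X := Fintype.ofFinite X
  have : Nonempty X := Nat.card_pos_iff.mp (by omega) |>.1
  have : Fintype (orbitRel.Quotient K X) := Fintype.ofFinite _
  by_contra! hfix
  have hburnside := sum_card_fixedBy_eq_card_orbits_mul_card_group K X
  rw [← Nat.card_eq_fintype_card (α := orbitRel.Quotient K X), card_orbitRel_quotient_eq_one,
    one_mul] at hburnside
  have hlt : ∑ _k : K, 1 < ∑ k : K, Fintype.card (fixedBy X k) := by
    refine Finset.sum_lt_sum (fun k _ => ?_) ⟨1, Finset.mem_univ _, ?_⟩
    · obtain ⟨x, hx⟩ := hfix k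
      exact Fintype.card_pos_iff.mpr ⟨⟨x, hx⟩⟩
    · simpa [Nat.card_eq_fintype_card] using hX
  rw [hburnside, Finset.sum_const, Finset.card_univ, smul_eq_mul, mul_one] at hlt
  exact lt_irrefl _ hlt

theorem MulAction.exists_forall_smul_ne_s1 {G X : Type*} [Group G] [MulAction G X] [Finite X]
    [IsPretransitive G X] (hX : 1 < Nat.card X) : ∃ g : G, ∀ x : X, g • x ≠ x := by
  let K := (toPermHom G X).range
  have : IsPretransitive K X := ⟨fun x y => by
    obtain ⟨g, hg⟩ := exists_smul_eq G x y
    exact ⟨⟨toPerm g, g, rfl⟩, hg⟩⟩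
  obtain ⟨⟨_, g, rfl⟩, hg⟩ := exists_forall_smul_ne_of_finite_s1 (K := K) hX
  exact ⟨g, hg⟩

/-- Let `G` be a group and `H` a proper subgroup of finite index in `G`. Then
there exists `x ∈ G` such that `x • gH ≠ gH` for every `g ∈ G`: the permutation of the left
coset space `G ⧸ H` induced by left multiplication by `x` has no fixed point. -/
theorem exists_fixed_point_free_left_mul_on_cosets {G : Type*} [Group G] (H : Subgroup G)
    (hH : H ≠ ⊤) (hfin : Finite (G ⧸ H)) :
    ∃ x : G, ∀ g : G, ((x * g : G) : G ⧸ H) ≠ (g : G ⧸ H) := by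
  obtain ⟨x, hx⟩ := exists_forall_smul_ne_s1 (G := G) (X := G ⧸ H) (H.one_lt_index_of_ne_top hH)
  exact ⟨x, fun g => hx g⟩
end

section
/- Consider a commutative diagram of groups with five rows and three columns: groups C_i′, C_i, C_i″ for 1 ≤ i ≤ 5, horizontal homomorphisms g_i : C_i′ → C_i and h_i : C_i → C_i″ for all i, vertical homomorphisms f_i′ : C_i′ → C_{i+1}′, f_i : C_i → C_{i+1}, f_i″ : C_i″ → C_{i+1}″ for 1 ≤ i ≤ 4, and sections j_i : C_i″ → C_i for i = 1, 2, 3. Assume: (i) all squares commute, i.e. f_i∘g_i = g_{i+1}∘f_i′ and f_i″∘h_i = h_{i+1}∘f_i for 1 ≤ i ≤ 4, and f_i∘j_i = j_{i+1}∘f_i″ for i = 1, 2; (ii) each of the three columns is exact (im(f_i′) = ker(f_{i+1}′), im(f_i) = ker(f_{i+1}), im(f_i″) = ker(f_{i+1}″) for i = 1, 2, 3); (iii) for i ∈ {1, 2, 4, 5}, the i-th row 1 → C_i′ →g_i C_i →h_i C_i″ → 1 is a short exact sequence (g_i injective, h_i surjective, ker(h_i) = im(g_i)); (iv) for i = 1,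 2, the i-th row splits via j_i, i.e. h_i∘j_i = id_{C_i″}; (v) for the third row, im(g₃) ⊆ ker(h₃) and h₃∘j₃ = id_{C₃″}. Then the third row 1 → C₃′ →g₃ C₃ →h₃ C₃″ → 1 is a split short exact sequence: g₃ is injective, h₃ is surjective, and ker(h₃) = im(g₃). -/
/-- (Lemma 3.1 of the paper.) Consider a commutative diagram of groups with five
rows `1 → Cᵢ′ →gᵢ Cᵢ →hᵢ Cᵢ″ → 1` (`1 ≤ i ≤ 5`), vertical maps `fAᵢ : Cᵢ′ →* C_{i+1}′`,
`fBᵢ : Cᵢ →* C_{i+1}`, `fDᵢ : Cᵢ″ →* C_{i+1}″` (`1 ≤ i ≤ 4`), and sections `jᵢ : Cᵢ″ →* Cᵢ`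
(`i = 1, 2, 3`). If all squares commute, each column is exact, the rows `i ∈ {1,2,4,5}` are short
exact sequences, the rows `i = 1, 2` split via `jᵢ`, and for the third row `im g₃ ⊆ ker h₃` and
`h₃ ∘ j₃ = id`, then the third row is a (split) short exact sequence. -/
theorem third_row_split_exact
    {A₁ A₂ A₃ A₄ A₅ B₁ B₂ B₃ B₄ B₅ D₁ D₂ D₃ D₄ D₅ : Type*}
    [Group A₁] [Group A₂] [Group A₃] [Group A₄] [Group A₅]
    [Group B₁] [Group B₂] [Group B₃] [Group B₄] [Group B₅]
    [Group D₁] [Group D₂] [Group D₃] [Group D₄] [Group D₅]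
    (g₁ : A₁ →* B₁) (g₂ : A₂ →* B₂) (g₃ : A₃ →* B₃) (g₄ : A₄ →* B₄) (g₅ : A₅ →* B₅)
    (h₁ : B₁ →* D₁) (h₂ : B₂ →* D₂) (h₃ : B₃ →* D₃) (h₄ : B₄ →* D₄) (h₅ : B₅ →* D₅)
    (fA₁ : A₁ →* A₂) (fA₂ : A₂ →* A₃) (fA₃ : A₃ →* A₄) (fA₄ : A₄ →* A₅)
    (fB₁ : B₁ →* B₂) (fB₂ : B₂ →* B₃) (fB₃ : B₃ →* B₄) (fB₄ : B₄ →* B₅)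
    (fD₁ : D₁ →* D₂) (fD₂ : D₂ →* D₃) (fD₃ : D₃ →* D₄) (fD₄ : D₄ →* D₅)
    (j₁ : D₁ →* B₁) (j₂ : D₂ →* B₂) (j₃ : D₃ →* B₃)
    -- (i) all squares commute
    (sqg₁ : fB₁.comp g₁ = g₂.comp fA₁) (sqg₂ : fB₂.comp g₂ = g₃.comp fA₂)
    (sqg₃ : fB₃.comp g₃ = g₄.comp fA₃) (sqg₄ : fB₄.comp g₄ = g₅.comp fA₄)
    (sqh₁ : fD₁.comp h₁ = h₂.comp fB₁) (sqh₂ : fD₂.comp h₂ = h₃.comp fB₂)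
    (sqh₃ : fD₃.comp h₃ = h₄.comp fB₃) (sqh₄ : fD₄.comp h₄ = h₅.comp fB₄)
    (sqj₁ : fB₁.comp j₁ = j₂.comp fD₁) (sqj₂ : fB₂.comp j₂ = j₃.comp fD₂)
    -- (ii) the three columns are exact
    (colA₁ : fA₁.range = fA₂.ker) (colA₂ : fA₂.range = fA₃.ker) (colA₃ : fA₃.range = fA₄.ker)
    (colB₁ : fB₁.range = fB₂.ker) (colB₂ : fB₂.range = fB₃.ker) (colB₃ : fB₃.range = fB₄.ker)
    (colD₁ : fD₁.range = fD₂.ker) (colD₂ : fD₂.range = fD₃.ker) (colD₃ : fD₃.range = fD₄.ker)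
    -- (iii) rows 1, 2, 4, 5 are short exact
    (r₁inj : Function.Injective g₁) (r₁surj : Function.Surjective h₁) (r₁ex : h₁.ker = g₁.range)
    (r₂inj : Function.Injective g₂) (r₂surj : Function.Surjective h₂) (r₂ex : h₂.ker = g₂.range)
    (r₄inj : Function.Injective g₄) (r₄surj : Function.Surjective h₄) (r₄ex : h₄.ker = g₄.range)
    (r₅inj : Function.Injective g₅) (r₅surj : Function.Surjective h₅) (r₅ex : h₅.ker = g₅.range)
    -- (iv) rows 1 and 2 split
    (sp₁ : h₁.comp j₁ = MonoidHom.id D₁) (sp₂ : h₂.comp j₂ = MonoidHom.id D₂)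
    -- (v) third row: `im g₃ ⊆ ker h₃` and `h₃ ∘ j₃ = id`
    (r₃sub : g₃.range ≤ h₃.ker) (sp₃ : h₃.comp j₃ = MonoidHom.id D₃) :
    Function.Injective g₃ ∧ Function.Surjective h₃ ∧ h₃.ker = g₃.range := by

  have hsurj : Function.Surjective h₃ := fun d =>
    ⟨j₃ d, by simpa using congrArg (fun f => f d) sp₃⟩
  refine ⟨?_, hsurj, ?_⟩
  · -- injectivity of g₃
    intro a a' hEq
    have key : ∀ a : A₃, g₃ a = 1 → a = 1 := by
      intro a ha
      have h1 : g₄ (fA₃ a) = 1 := by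
        have := congrArg (fun f => f a) sqg₃
        simp only [MonoidHom.comp_apply] at this
        rw [← this, ha, map_one]
      have h2 : fA₃ a = 1 := by
        have := r₄inj (a₂ := 1) (by simpa using h1); simpa using this
      have h3 : a ∈ fA₂.range := by rw [colA₂]; exact h2
      obtain ⟨a₂, rfl⟩ := h3
      have h4 : fB₂ (g₂ a₂) = 1 := by
        have := congrArg (fun f => f a₂) sqg₂
        simp only [MonoidHom.comp_apply] at this
        rw [this, ha]
      have h5 : g₂ a₂ ∈ fB₁.range := by rw [colB₁]; exact h4
      obtain ⟨b₁, hb₁⟩ := h5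
      have h6 : fD₁ (h₁ b₁) = 1 := by
        have := congrArg (fun f => f b₁) sqh₁
        simp only [MonoidHom.comp_apply] at this
        rw [this, hb₁]
        have : g₂ a₂ ∈ h₂.ker := by rw [r₂ex]; exact ⟨a₂, rfl⟩
        exact this
      set b₁' := b₁ * (j₁ (h₁ b₁))⁻¹ with hb₁'
      have h7 : b₁' ∈ h₁.ker := by
        have hj : h₁ (j₁ (h₁ b₁)) = h₁ b₁ := congrArg (fun f => f (h₁ b₁)) sp₁
        simp [hb₁', MonoidHom.mem_ker, hj]
      rw [r₁ex] at h7
      obtain ⟨a₁, ha₁⟩ := h7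
      have h8 : fB₁ b₁' = g₂ a₂ := by
        have hj : fB₁ (j₁ (h₁ b₁)) = j₂ (fD₁ (h₁ b₁)) :=
          congrArg (fun f => f (h₁ b₁)) sqj₁
        simp [hb₁', hj, h6, hb₁]
      have h9 : g₂ (fA₁ a₁) = g₂ a₂ := by
        have := congrArg (fun f => f a₁) sqg₁
        simp only [MonoidHom.comp_apply] at this
        rw [← this, ha₁, h8]
      have h10 : a₂ ∈ fA₂.ker := by
        rw [← colA₁]; exact ⟨a₁, r₂inj h9⟩
      simpa using h10
    have : g₃ (a * a'⁻¹) = 1 := by simp [hEq]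
    have := key _ this
    exact mul_inv_eq_one.mp this
  · -- exactness
    refine le_antisymm ?_ r₃sub
    intro b hb
    have hb1 : h₃ b = 1 := hb
    have h1 : h₄ (fB₃ b) = 1 := by
      have := congrArg (fun f => f b) sqh₃
      simp only [MonoidHom.comp_apply] at this
      rw [← this, hb1, map_one]
    have h2 : fB₃ b ∈ g₄.range := by rw [← r₄ex]; exact h1
    obtain ⟨a₄, ha₄⟩ := h2
    have h3 : g₅ (fA₄ a₄) = 1 := by
      have := congrArg (fun f => f a₄) sqg₄
      simp only [MonoidHom.comp_apply] at this
      rw [← this, ha₄]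
      have : fB₃ b ∈ fB₄.ker := by rw [← colB₃]; exact ⟨b, rfl⟩
      exact this
    have h4 : fA₄ a₄ = 1 := by
      have := r₅inj (a₂ := 1) (by simpa using h3); simpa using this
    have h5 : a₄ ∈ fA₃.range := by rw [colA₃]; exact h4
    obtain ⟨a₃, rfl⟩ := h5
    have h6 : fB₃ (g₃ a₃) = fB₃ b := by
      have := congrArg (fun f => f a₃) sqg₃
      simp only [MonoidHom.comp_apply] at this
      rw [this, ha₄]
    have h7 : b * (g₃ a₃)⁻¹ ∈ fB₂.range := by
      rw [colB₂]
      simp [MonoidHom.mem_ker, h6]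
    obtain ⟨b₂, hb₂⟩ := h7
    have h8 : fD₂ (h₂ b₂) = 1 := by
      have := congrArg (fun f => f b₂) sqh₂
      simp only [MonoidHom.comp_apply] at this
      rw [this, hb₂]
      have hga : h₃ (g₃ a₃) = 1 := r₃sub ⟨a₃, rfl⟩
      simp [hb1, hga]
    have h9 : h₂ b₂ ∈ fD₁.range := by rw [colD₁]; exact h8
    obtain ⟨d₁, hd₁⟩ := h9
    set b₂' := b₂ * (j₂ (h₂ b₂))⁻¹ with hb₂'
    have h10 : b₂' ∈ h₂.ker := by
      have hj : h₂ (j₂ (h₂ b₂)) = h₂ b₂ := congrArg (fun f => f (h₂ b₂)) sp₂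
      simp [hb₂', MonoidHom.mem_ker, hj]
    rw [r₂ex] at h10
    obtain ⟨a₂, ha₂⟩ := h10
    have h11 : fB₂ b₂' = fB₂ b₂ := by
      have hj : fB₂ (j₂ (h₂ b₂)) = j₃ (fD₂ (h₂ b₂)) :=
        congrArg (fun f => f (h₂ b₂)) sqj₂
      simp [hb₂', hj, h8]
    have h12 : g₃ (fA₂ a₂) = b * (g₃ a₃)⁻¹ := by
      have := congrArg (fun f => f a₂) sqg₂
      simp only [MonoidHom.comp_apply] at this
      rw [← this, ha₂, h11, hb₂]
    exact ⟨fA₂ a₂ * a₃, by rw [map_mul, h12]; group⟩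
end

section
/- Consider a commutative diagram with five rows and three columns as follows: for i = 1, 2, the objects C_i′, C_i, C_i″ are groups and all maps between them are group homomorphisms; for i = 3, 4, 5, the objects C_i′, C_i, C_i″ are pointed sets (sets with a distinguished element) and all maps between them are maps of pointed sets (sending distinguished element to distinguished element). The maps are: horizontal g_i : C_i′ → C_i and h_i : C_i → C_i″ for all i, vertical f_i′ : C_i′ → C_{i+1}′, f_i : C_i → C_{i+1}, f_i″ : C_i″ → C_{i+1}″ for 1 ≤ i ≤ 4, and sections j_i : C_i″ → C_i for i = 1, 2, 3. Assume: (i) all squares commute (f_i∘g_i = g_{i+1}∘f_i′, f_i″∘h_i = h_{i+1}∘f_i for 1 ≤ i ≤ 4, and f_i∘j_i = j_{i+1}∘f_i″ for i = 1, 2); (ii) each column is exact in the sense of pointed sets (the image of each map equals the kernel, i.e. the preimage of the distinguished element, of the next); (iii) for i ∈ {1, 2, 4, 5} the i-th row is a short exact sequence in the sense of pointed sets (ker(g_i) is the distinguished singleton, im(g_i) = ker(h_i), and h_i is surjective); (iv) for i = 1, 2 the row splits: h_i∘j_i = id_{C_i″}; (v) im(g₃) ⊆ ker(h₃) and h₃∘j₃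 = id_{C₃″}. Then ker(g₃) is a singleton: the only element of C₃′ mapped by g₃ to the distinguished element of C₃ is the distinguished element of C₃′. -/
/-- (Remark 3.2 of the paper.) Consider a commutative diagram with five rows and
three columns in which the first two rows consist of groups `Cᵢ′, Cᵢ, Cᵢ″` (`i = 1, 2`) and group
homomorphisms, while the last three rows consist of pointed sets `(Cᵢ′, aᵢ), (Cᵢ, bᵢ), (Cᵢ″, dᵢ)`
(`i = 3, 4, 5`) and pointed maps.  Assume all squares commute, each column is exact in the sense
of pointed sets, the rows `i ∈ {1,2,4,5}` are short exact sequences of pointed sets, the rows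
`i = 1, 2` split via `jᵢ`, and for the third row `im g₃ ⊆ ker h₃` and `h₃ ∘ j₃ = id`.  Then the
kernel of `g₃` is a singleton: the only element of `C₃′` mapped by `g₃` to the distinguished
element of `C₃` is the distinguished element of `C₃′`. -/
theorem third_row_kernel_singleton
    -- rows 1 and 2: groups
    {A₁ A₂ B₁ B₂ D₁ D₂ : Type*}
    [Group A₁] [Group A₂] [Group B₁] [Group B₂] [Group D₁] [Group D₂]
    -- rows 3, 4, 5: pointed sets
    {A₃ A₄ A₅ B₃ B₄ B₅ D₃ D₄ D₅ : Type*}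
    (a₃ : A₃) (a₄ : A₄) (a₅ : A₅) (b₃ : B₃) (b₄ : B₄) (b₅ : B₅) (d₃ : D₃) (d₄ : D₄) (d₅ : D₅)
    -- horizontal maps: rows 1 and 2 are group homomorphisms
    (g₁ : A₁ →* B₁) (g₂ : A₂ →* B₂) (h₁ : B₁ →* D₁) (h₂ : B₂ →* D₂)
    (j₁ : D₁ →* B₁) (j₂ : D₂ →* B₂)
    -- horizontal maps: rows 3, 4, 5 are pointed maps
    (g₃ : A₃ → B₃) (g₄ : A₄ → B₄) (g₅ : A₅ → B₅)
    (h₃ : B₃ → D₃) (h₄ : B₄ → D₄) (h₅ : B₅ → D₅) (j₃ : D₃ → B₃)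
    (hg₃ : g₃ a₃ = b₃) (hg₄ : g₄ a₄ = b₄) (hg₅ : g₅ a₅ = b₅)
    (hh₃ : h₃ b₃ = d₃) (hh₄ : h₄ b₄ = d₄) (hh₅ : h₅ b₅ = d₅) (hj₃ : j₃ d₃ = b₃)
    -- vertical maps: between rows 1 and 2 group homomorphisms, afterwards pointed maps
    (fA₁ : A₁ →* A₂) (fB₁ : B₁ →* B₂) (fD₁ : D₁ →* D₂)
    (fA₂ : A₂ → A₃) (fB₂ : B₂ → B₃) (fD₂ : D₂ → D₃)
    (fA₃ : A₃ → A₄) (fB₃ : B₃ → B₄) (fD₃ : D₃ → D₄)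
    (fA₄ : A₄ → A₅) (fB₄ : B₄ → B₅) (fD₄ : D₄ → D₅)
    (hfA₂ : fA₂ 1 = a₃) (hfB₂ : fB₂ 1 = b₃) (hfD₂ : fD₂ 1 = d₃)
    (hfA₃ : fA₃ a₃ = a₄) (hfB₃ : fB₃ b₃ = b₄) (hfD₃ : fD₃ d₃ = d₄)
    (hfA₄ : fA₄ a₄ = a₅) (hfB₄ : fB₄ b₄ = b₅) (hfD₄ : fD₄ d₄ = d₅)
    -- (i) all squares commute
    (sqg₁ : fB₁.comp g₁ = g₂.comp fA₁)
    (sqg₂ : ∀ x : A₂, fB₂ (g₂ x) = g₃ (fA₂ x))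
    (sqg₃ : ∀ x : A₃, fB₃ (g₃ x) = g₄ (fA₃ x))
    (sqg₄ : ∀ x : A₄, fB₄ (g₄ x) = g₅ (fA₄ x))
    (sqh₁ : fD₁.comp h₁ = h₂.comp fB₁)
    (sqh₂ : ∀ y : B₂, fD₂ (h₂ y) = h₃ (fB₂ y))
    (sqh₃ : ∀ y : B₃, fD₃ (h₃ y) = h₄ (fB₃ y))
    (sqh₄ : ∀ y : B₄, fD₄ (h₄ y) = h₅ (fB₄ y))
    (sqj₁ : fB₁.comp j₁ = j₂.comp fD₁)
    (sqj₂ : ∀ z : D₂, fB₂ (j₂ z) = j₃ (fD₂ z))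
    -- (ii) the three columns are exact in the sense of pointed sets
    (colA₁ : ∀ y : A₂, (∃ x : A₁, fA₁ x = y) ↔ fA₂ y = a₃)
    (colA₂ : ∀ y : A₃, (∃ x : A₂, fA₂ x = y) ↔ fA₃ y = a₄)
    (colA₃ : ∀ y : A₄, (∃ x : A₃, fA₃ x = y) ↔ fA₄ y = a₅)
    (colB₁ : ∀ y : B₂, (∃ x : B₁, fB₁ x = y) ↔ fB₂ y = b₃)
    (colB₂ : ∀ y : B₃, (∃ x : B₂, fB₂ x = y) ↔ fB₃ y = b₄)
    (colB₃ : ∀ y : B₄, (∃ x : B₃, fB₃ x = y) ↔ fB₄ y = b₅)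
    (colD₁ : ∀ y : D₂, (∃ x : D₁, fD₁ x = y) ↔ fD₂ y = d₃)
    (colD₂ : ∀ y : D₃, (∃ x : D₂, fD₂ x = y) ↔ fD₃ y = d₄)
    (colD₃ : ∀ y : D₄, (∃ x : D₃, fD₃ x = y) ↔ fD₄ y = d₅)
    -- (iii) rows 1, 2, 4, 5 are short exact sequences of pointed sets
    (r₁ker : ∀ x : A₁, g₁ x = 1 → x = 1)
    (r₁ex : ∀ y : B₁, (∃ x : A₁, g₁ x = y) ↔ h₁ y = 1)
    (r₁surj : Function.Surjective h₁)
    (r₂ker : ∀ x : A₂, g₂ x = 1 → x = 1)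
    (r₂ex : ∀ y : B₂, (∃ x : A₂, g₂ x = y) ↔ h₂ y = 1)
    (r₂surj : Function.Surjective h₂)
    (r₄ker : ∀ x : A₄, g₄ x = b₄ → x = a₄)
    (r₄ex : ∀ y : B₄, (∃ x : A₄, g₄ x = y) ↔ h₄ y = d₄)
    (r₄surj : Function.Surjective h₄)
    (r₅ker : ∀ x : A₅, g₅ x = b₅ → x = a₅)
    (r₅ex : ∀ y : B₅, (∃ x : A₅, g₅ x = y) ↔ h₅ y = d₅)
    (r₅surj : Function.Surjective h₅)
    -- (iv) rows 1 and 2 split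
    (sp₁ : h₁.comp j₁ = MonoidHom.id D₁) (sp₂ : h₂.comp j₂ = MonoidHom.id D₂)
    -- (v) third row: `im g₃ ⊆ ker h₃` and `h₃ ∘ j₃ = id`
    (r₃sub : ∀ x : A₃, h₃ (g₃ x) = d₃) (sp₃ : ∀ z : D₃, h₃ (j₃ z) = z) :
    ∀ x : A₃, g₃ x = b₃ → x = a₃ := by
  intro x hx
  -- Step 1: fA₃ x = a₄, so x lifts to x₂ ∈ A₂
  have h1 : fA₃ x = a₄ := r₄ker _ (by rw [← sqg₃, hx, hfB₃])
  obtain ⟨x₂, hx₂⟩ := (colA₂ x).mpr h1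
  -- Step 2: g₂ x₂ lifts to y₁ ∈ B₁
  have hb : fB₂ (g₂ x₂) = b₃ := by rw [sqg₂, hx₂, hx]
  obtain ⟨y₁, hy₁⟩ := (colB₁ _).mpr hb
  -- Step 3: split y₁ = (g₁ t) * j₁ (h₁ y₁)
  have hj : h₁ (j₁ (h₁ y₁)) = h₁ y₁ := by
    have := congrArg (fun φ => φ (h₁ y₁)) sp₁
    simpa using this
  have hk : h₁ (y₁ * (j₁ (h₁ y₁))⁻¹) = 1 := by
    rw [map_mul, map_inv, hj, mul_inv_cancel]
  obtain ⟨t, ht⟩ := (r₁ex _).mpr hk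
  -- Step 4: fD₁ (h₁ y₁) = 1
  have hw : fD₁ (h₁ y₁) = 1 := by
    have hsq : fD₁ (h₁ y₁) = h₂ (fB₁ y₁) := congrArg (fun φ => φ y₁) sqh₁
    have : h₂ (g₂ x₂) = 1 := (r₂ex _).mp ⟨x₂, rfl⟩
    rw [hsq, hy₁, this]
  -- Step 5: g₂ x₂ = g₂ (fA₁ t)
  have hy₁' : y₁ = g₁ t * j₁ (h₁ y₁) := by
    rw [ht]; group
  have hg2 : g₂ x₂ = g₂ (fA₁ t) := by
    have h1' : fB₁ (g₁ t) = g₂ (fA₁ t) := congrArg (fun φ => φ t) sqg₁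
    have h2' : fB₁ (j₁ (h₁ y₁)) = j₂ (fD₁ (h₁ y₁)) :=
      congrArg (fun φ => φ (h₁ y₁)) sqj₁
    rw [← hy₁, hy₁', map_mul, h1', h2', hw, map_one, mul_one]
  have hinj : Function.Injective g₂ := (injective_iff_map_eq_one g₂).mpr r₂ker
  have hx₂t : x₂ = fA₁ t := hinj hg2
  have : fA₂ x₂ = a₃ := (colA₁ x₂).mp ⟨t, hx₂t.symm⟩
  rw [← hx₂, this]
end

section
/- Let X be a topological space and p ∈ X. Let j : Ω_pX → ΛX be the inclusion of the based loop space into the free loop space, e : ΛX → X the evaluation map e(γ) = γ(0), and c : X → ΛX the constant-loop map c(q) = c_q; all three maps are continuous. Then the induced homomorphisms on fundamental groups based at the constant loop c_p form a split short exact sequence: e_* ∘ c_* is the identity of π₁(X, p); j_* : π₁(Ω_pX, c_p) → π₁(ΛX, c_p) is injective; e_* : π₁(ΛX, c_p) → π₁(X, p) is surjective; and the kernel of e_* equals the image of j_*. -/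
open CategoryTheory

universe u

/-- The homomorphism `π₁(X, x) →* π₁(Y, f x)` induced by a continuous map `f : X → Y`. -/
noncomputable def inducedFundamentalGroupHom {X Y : Type u} [TopologicalSpace X]
    [TopologicalSpace Y] (f : C(X, Y)) (x : X) :
    FundamentalGroup X x →* FundamentalGroup Y (f x) :=
  Functor.mapEnd (X := FundamentalGroupoid.mk x)
    (FundamentalGroupoid.fundamentalGroupoidFunctor.map (X := TopCat.of X) (Y := TopCat.of Y) (TopCat.ofHom f))

/-- The circle `S¹ = ℝ ⧸ ℤ`, the domain of free loops. -/
abbrev FreeLoopCircle : Type := AddCircle (1 : ℝ)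

/-- The free loop space `ΛX = C(S¹, X)`, with the compact-open topology. -/
abbrev FreeLoopSpace (X : Type) [TopologicalSpace X] : Type := C(FreeLoopCircle, X)

/-- The constant loop `c_p` at a point `p`. -/
noncomputable abbrev constLoop {X : Type} [TopologicalSpace X] (p : X) : FreeLoopSpace X :=
  ContinuousMap.const FreeLoopCircle p

/-- The based loop space `Ω_pX = {γ ∈ ΛX : γ(0) = p}`, with the subspace topology. -/
abbrev BasedLoopSpace (X : Type) [TopologicalSpace X] (p : X) : Type :=
  {γ : FreeLoopSpace X // γ 0 = p}

/-- The constant loop `c_p`, as the basepoint of `Ω_pX`. -/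
noncomputable abbrev basedConstLoop {X : Type} [TopologicalSpace X] (p : X) : BasedLoopSpace X p :=
  ⟨constLoop p, rfl⟩

/-- The inclusion `j : Ω_pX → ΛX`. -/
noncomputable abbrev loopInclusion (X : Type) [TopologicalSpace X] (p : X) :
    C(BasedLoopSpace X p, FreeLoopSpace X) :=
  ⟨Subtype.val, continuous_subtype_val⟩

/-- The evaluation map `e : ΛX → X`, `e(γ) = γ(0)`. -/
noncomputable abbrev loopEval (X : Type) [TopologicalSpace X] : C(FreeLoopSpace X, X) :=
  ⟨fun γ => γ 0, continuous_eval_const 0⟩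

/-- The constant-loop map `c : X → ΛX`, `c(q) = c_q`. -/
noncomputable abbrev constLoopMap (X : Type) [TopologicalSpace X] : C(X, FreeLoopSpace X) :=
  ContinuousMap.const'

/-!
The free loops `Φ (s, t)` of a square are moved to the basepoint by *lassoing*: `Φ (s, t)` is
conjugated by the rope `s' ↦ Φ (s', t) 0`, `s' ∈ [0, s]`, which shrinks to a point at `s = 0`, so the
edge `s = 0` is left unchanged.

If `e ∘ Γ` is null-homotopic via `F`, lassoing `Γ t` along `s' ↦ F (s - s', t)` is a homotopy from
`Γ` to a loop of loops based at `F (1, t) = p`. If `j ∘ β` is null-homotopic via `F`, lassoing `F`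
and lassoing the constant loops `c ∘ e ∘ F` are homotopies in `Ω_pX` from `β` and from the constant
path to one and the same edge, so `β` is null-homotopic; this is where the section `c` is used.
-/

open unitInterval Topology

namespace unitInterval

noncomputable def toAddCircle : C(I, AddCircle (1 : ℝ)) :=
  ⟨fun u => ((u : ℝ) : AddCircle (1 : ℝ)), (AddCircle.continuous_mk' 1).comp continuous_subtype_val⟩

@[simp] lemma toAddCircle_zero : toAddCircle 0 = 0 := rfl

@[simp] lemma toAddCircle_one : toAddCircle 1 = 0 := AddCircle.coe_period 1

lemma toAddCircle_surjective : Function.Surjective toAddCircle := fun z => by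
  obtain ⟨h₀, h₁⟩ := (AddCircle.equivIco 1 0 z).2
  exact ⟨⟨_, h₀, by simpa using h₁.le⟩, (AddCircle.equivIco 1 0).symm_apply_apply z⟩

lemma eq_of_toAddCircle_eq {u v : I} (h : toAddCircle u = toAddCircle v) (hu : u ≠ 1)
    (hv : v ≠ 1) : u = v := by
  have hmem : ∀ w : I, w ≠ 1 → (w : ℝ) ∈ Set.Ico 0 (0 + 1) := fun w hw =>
    ⟨w.2.1, by simpa using lt_of_le_of_ne w.2.2 (fun h' => hw (Subtype.ext h'))⟩
  exact Subtype.ext ((AddCircle.coe_eq_coe_iff_of_mem_Ico (hmem u hu) (hmem v hv)).mp h)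

lemma apply_eq_of_toAddCircle_eq {Y : Type*} {f : I → Y} (hf : f 0 = f 1) {u v : I}
    (h : toAddCircle u = toAddCircle v) : f u = f v := by
  have fold : ∀ w : I, ∃ w' : I, w' ≠ 1 ∧ toAddCircle w' = toAddCircle w ∧ f w' = f w := by
    intro w
    by_cases hw : w = 1
    · exact ⟨0, zero_ne_one, by simp [hw], by rw [hw, hf]⟩
    · exact ⟨w, hw, rfl, rfl⟩
  obtain ⟨u', hu', hu'c, hu'f⟩ := fold u
  obtain ⟨v', hv', hv'c, hv'f⟩ := fold v
  rw [← hu'f, ← hv'f, eq_of_toAddCircle_eq (hu'c.trans (h.trans hv'c.symm)) hu' hv']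

lemma isQuotientMap_prodMap_toAddCircle (A : Type*) [TopologicalSpace A] :
    IsQuotientMap ((ContinuousMap.id A).prodMap toAddCircle) :=
  (isProperMap_id.prodMap toAddCircle.continuous.isProperMap).isClosedMap.isQuotientMap
    (continuous_id.prodMap toAddCircle.continuous)
    (Function.surjective_id.prodMap toAddCircle_surjective)

end unitInterval

section LoopFamily

variable {A : Type*} {X : Type} [TopologicalSpace A] [TopologicalSpace X]

noncomputable def loopFamily (g : C(A × I, X)) (hg : ∀ a, g (a, 0) = g (a, 1)) :
    C(A, FreeLoopSpace X) :=
  ((isQuotientMap_prodMap_toAddCircle A).lift g fun ⟨a, u⟩ ⟨b, v⟩ h => by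
    obtain ⟨rfl, huv⟩ := Prod.ext_iff.mp h
    exact apply_eq_of_toAddCircle_eq (f := fun u => g (a, u)) (hg a) huv).curry

lemma loopFamily_apply_toAddCircle (g : C(A × I, X)) (hg : ∀ a, g (a, 0) = g (a, 1))
    (a : A) (u : I) : loopFamily g hg a (toAddCircle u) = g (a, u) :=
  DFunLike.congr_fun ((isQuotientMap_prodMap_toAddCircle A).lift_comp g _) (a, u)

lemma FreeLoopSpace.ext_toAddCircle {γ γ' : FreeLoopSpace X}
    (h : ∀ u, γ (toAddCircle u) = γ' (toAddCircle u)) : γ = γ' :=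
  ContinuousMap.ext fun z => by
    obtain ⟨u, rfl⟩ := toAddCircle_surjective z
    exact h u

end LoopFamily

section Lasso

variable {A : Type*} {X : Type} [TopologicalSpace A] [TopologicalSpace X]

/-- The lasso `w|[0,r] ⬝ γ ⬝ (w|[0,r])⁻¹` at `w 0`, for `w r = γ 0`. The rope is run through on
`[0, r/4]` and back on `[1 - r/4, 1]`, so that for `r = 0` the lasso is `γ` itself. -/
noncomputable def lassoFun (r : I) (γ : FreeLoopSpace X) (w : I → X) (u : I) : X :=
  if 4 * min (u : ℝ) (1 - u) ≤ r then w (Set.projIcc 0 1 zero_le_one (4 * min (u : ℝ) (1 - u)))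
  else γ (((u - r / 4) / (1 - r / 2) : ℝ) : AddCircle (1 : ℝ))

lemma continuous_lassoFun {r : C(A, I)} {γ : C(A, FreeLoopSpace X)} {w : C(A × I, X)}
    (h : ∀ a, γ a 0 = w (a, r a)) :
    Continuous fun au : A × I => lassoFun (r au.1) (γ au.1) (fun x => w (au.1, x)) au.2 := by
  have hr : ∀ a, 1 - (r a : ℝ) / 2 ≠ 0 := fun a => by linarith [(r a).2.2]
  refine Continuous.if_le (by fun_prop) ?_ (by fun_prop) (by fun_prop) ?_
  · exact continuous_eval.comp ((γ.continuous.comp continuous_fst).prodMk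
      ((AddCircle.continuous_mk' 1).comp
        (Continuous.div (by fun_prop) (by fun_prop) fun au => hr au.1)))
  · rintro ⟨a, u⟩ hfr
    simp only at hfr ⊢
    rw [hfr, Set.projIcc_val, ← h a]
    congr 1
    rcases min_cases (u : ℝ) (1 - u) with ⟨hm, -⟩ | ⟨hm, -⟩
    · rw [show (u : ℝ) - r a / 4 = 0 by linarith, zero_div]
      rfl
    · rw [show ((u : ℝ) - r a / 4) / (1 - r a / 2) = 1 by
        rw [div_eq_one_iff_eq (hr a)]; linarith]
      exact (AddCircle.coe_period (1 : ℝ)).symm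

noncomputable def lassoFamily (r : C(A, I)) (γ : C(A, FreeLoopSpace X)) (w : C(A × I, X))
    (h : ∀ a, γ a 0 = w (a, r a)) : C(A, FreeLoopSpace X) :=
  loopFamily ⟨_, continuous_lassoFun h⟩ fun a => by simp [lassoFun, (r a).2.1]

variable {r : C(A, I)} {γ : C(A, FreeLoopSpace X)} {w : C(A × I, X)} {h : ∀ a, γ a 0 = w (a, r a)}

lemma lassoFamily_apply_toAddCircle (a : A) (u : I) :
    lassoFamily r γ w h a (toAddCircle u) = lassoFun (r a) (γ a) (fun x => w (a, x)) u :=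
  loopFamily_apply_toAddCircle _ _ a u

lemma lassoFamily_apply_zero (a : A) : lassoFamily r γ w h a 0 = w (a, 0) := by
  rw [← toAddCircle_zero, lassoFamily_apply_toAddCircle]
  simp [lassoFun, (r a).2.1]

lemma lassoFamily_of_width_eq_zero {a : A} (ha : r a = 0) : lassoFamily r γ w h a = γ a := by
  refine FreeLoopSpace.ext_toAddCircle fun u => ?_
  have hw : w (a, 0) = γ a 0 := by rw [h a, ha]
  rw [lassoFamily_apply_toAddCircle, lassoFun, ha]
  split_ifs with hu
  · have hu' : toAddCircle u = 0 := by
      rcases min_cases (u : ℝ) (1 - u) with ⟨hm, -⟩ | ⟨hm, -⟩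
      · rw [show u = 0 from Subtype.ext (show (u : ℝ) = 0 by
          rw [hm, Set.Icc.coe_zero] at hu; linarith [u.2.1]), toAddCircle_zero]
      · rw [show u = 1 from Subtype.ext (show (u : ℝ) = 1 by
          rw [hm, Set.Icc.coe_zero] at hu; linarith [u.2.2]), toAddCircle_one]
    rw [Set.projIcc_of_le_left _ (by simpa using hu), hu']
    exact hw
  · simp only [Set.Icc.coe_zero, zero_div, sub_zero, div_one]
    rfl

lemma lassoFamily_of_eq_constLoop {a : A} {q : X} (hγ : γ a = constLoop q)
    (hw : ∀ x, w (a, x) = q) : lassoFamily r γ w h a = constLoop q := by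
  refine FreeLoopSpace.ext_toAddCircle fun u => ?_
  rw [lassoFamily_apply_toAddCircle, lassoFun]
  split_ifs <;> simp [hγ, hw]

end Lasso

theorem Path.Homotopic.of_square {Y : Type*} [TopologicalSpace Y] {y₀ y₁ : Y}
    {γ γ' : Path y₀ y₁} (H : C(I × I, Y)) (h₀ : ∀ t, H (0, t) = γ t) (h₁ : ∀ t, H (1, t) = γ' t)
    (hsource : ∀ s, H (s, 0) = y₀) (htarget : ∀ s, H (s, 1) = y₁) : γ.Homotopic γ' :=
  ⟨{ toContinuousMap := H
     map_zero_left := h₀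
     map_one_left := h₁
     prop' := fun s x hx => by
       rcases hx with rfl | rfl
       · simp [hsource]
       · simp [htarget] }⟩

section LassoSquare

variable {X : Type} [TopologicalSpace X]

noncomputable def lassoSquare (Φ : C(I × I, FreeLoopSpace X)) : C(I × I, FreeLoopSpace X) :=
  lassoFamily ⟨Prod.fst, continuous_fst⟩ Φ ⟨fun q : (I × I) × I => Φ (q.2, q.1.2) 0, by fun_prop⟩
    fun _ => rfl

variable {Φ Ψ : C(I × I, FreeLoopSpace X)}

lemma lassoSquare_apply_zero (s t : I) : lassoSquare Φ (s, t) 0 = Φ (0, t) 0 :=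
  lassoFamily_apply_zero _

lemma lassoSquare_zero_left (t : I) : lassoSquare Φ (0, t) = Φ (0, t) :=
  lassoFamily_of_width_eq_zero rfl

lemma lassoSquare_of_forall_eq_constLoop {t : I} {q : X} (ht : ∀ s, Φ (s, t) = constLoop q)
    (s : I) : lassoSquare Φ (s, t) = constLoop q :=
  lassoFamily_of_eq_constLoop (ht s) fun x => by simp [ht x]

lemma lassoSquare_congr {s t : I} (hst : Φ (s, t) = Ψ (s, t))
    (hev : ∀ x, Φ (x, t) 0 = Ψ (x, t) 0) : lassoSquare Φ (s, t) = lassoSquare Ψ (s, t) :=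
  FreeLoopSpace.ext_toAddCircle fun u => by
    simp only [lassoSquare, lassoFamily_apply_toAddCircle, ContinuousMap.coe_mk, hst, hev]

noncomputable def basedLassoSquare {p : X} (Φ : C(I × I, FreeLoopSpace X))
    (hΦ : ∀ t, Φ (0, t) 0 = p) : C(I × I, BasedLoopSpace X p) :=
  ⟨fun a => ⟨lassoSquare Φ a, (lassoSquare_apply_zero a.1 a.2).trans (hΦ a.2)⟩,
    (lassoSquare Φ).continuous.subtype_mk _⟩

end LassoSquare

section Exactness

variable {X : Type} [TopologicalSpace X] {p : X}

theorem exists_map_loopInclusion_homotopic {Γ : Path (constLoop p) (constLoop p)}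
    (h : (Γ.map (loopEval X).continuous).Homotopic (Path.refl p)) :
    ∃ β : Path (basedConstLoop p) (basedConstLoop p),
      (β.map (loopInclusion X p).continuous).Homotopic Γ := by
  obtain ⟨F⟩ := h
  let rope : C((I × I) × I, X) := F.toContinuousMap.comp
    ⟨fun q => (Set.projIcc 0 1 zero_le_one (q.1.1 - q.2 : ℝ), q.1.2), by fun_prop⟩
  let H : C(I × I, FreeLoopSpace X) := lassoFamily ⟨Prod.fst, continuous_fst⟩
    (Γ.toContinuousMap.comp ⟨Prod.snd, continuous_snd⟩) rope fun a => by
      simp only [rope, ContinuousMap.comp_apply, ContinuousMap.coe_mk, sub_self, Set.projIcc_left]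
      exact (F.apply_zero a.2).symm
  have hH₁ : ∀ t, H (1, t) 0 = p := fun t => by
    simp [H, lassoFamily_apply_zero, rope]
  have hH_source : ∀ s, H (s, 0) = constLoop p := fun s =>
    lassoFamily_of_eq_constLoop (by simp) fun _ => F.source _
  have hH_target : ∀ s, H (s, 1) = constLoop p := fun s =>
    lassoFamily_of_eq_constLoop (by simp) fun _ => F.target _
  let β : Path (basedConstLoop p) (basedConstLoop p) :=
    { toFun := fun t => ⟨H (1, t), hH₁ t⟩
      source' := Subtype.ext (hH_source 1)
      target' := Subtype.ext (hH_target 1) }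
  exact ⟨β, (Path.Homotopic.of_square H (fun t => lassoFamily_of_width_eq_zero rfl)
    (fun _ => rfl) hH_source hH_target).symm⟩

theorem homotopic_refl_of_map_loopInclusion_homotopic_refl
    {β : Path (basedConstLoop p) (basedConstLoop p)}
    (h : (β.map (loopInclusion X p).continuous).Homotopic (Path.refl (constLoop p))) :
    β.Homotopic (Path.refl (basedConstLoop p)) := by
  obtain ⟨F⟩ := h
  let Φ : C(I × I, FreeLoopSpace X) := F.toContinuousMap
  let Ψ : C(I × I, FreeLoopSpace X) := (constLoopMap X).comp ((loopEval X).comp Φ)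
  have hΦ₀ : ∀ t, Φ (0, t) = β t := F.apply_zero
  have hΦ₁ : ∀ t, Φ (1, t) = constLoop p := F.apply_one
  have hΦ : ∀ t, Φ (0, t) 0 = p := fun t => by rw [hΦ₀]; exact (β t).2
  have hΨ : ∀ t, Ψ (0, t) 0 = p := hΦ
  have hΦ_source : ∀ s, Φ (s, 0) = constLoop p := F.source
  have hΦ_target : ∀ s, Φ (s, 1) = constLoop p := F.target
  have hΨ_source : ∀ s, Ψ (s, 0) = constLoop p := fun s => by simp [Ψ, hΦ_source s]
  have hΨ_target : ∀ s, Ψ (s, 1) = constLoop p := fun s => by simp [Ψ, hΦ_target s]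
  have hΨΦ : ∀ t, lassoSquare Ψ (1, t) = lassoSquare Φ (1, t) := fun t =>
    lassoSquare_congr (by simp [Ψ, hΦ₁ t]) fun _ => rfl
  let edge : Path (basedConstLoop p) (basedConstLoop p) :=
    { toFun := fun t => basedLassoSquare Φ hΦ (1, t)
      source' := Subtype.ext (lassoSquare_of_forall_eq_constLoop hΦ_source 1)
      target' := Subtype.ext (lassoSquare_of_forall_eq_constLoop hΦ_target 1) }
  have hβ_edge : β.Homotopic edge :=
    .of_square (basedLassoSquare Φ hΦ)
      (fun t => Subtype.ext ((lassoSquare_zero_left t).trans (hΦ₀ t))) (fun _ => rfl)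
      (fun s => Subtype.ext (lassoSquare_of_forall_eq_constLoop hΦ_source s))
      (fun s => Subtype.ext (lassoSquare_of_forall_eq_constLoop hΦ_target s))
  have hrefl_edge : (Path.refl (basedConstLoop p)).Homotopic edge :=
    .of_square (basedLassoSquare Ψ hΨ)
      (fun t => Subtype.ext ((lassoSquare_zero_left t).trans (by simp [Ψ, hΦ t])))
      (fun t => Subtype.ext (hΨΦ t))
      (fun s => Subtype.ext (lassoSquare_of_forall_eq_constLoop hΨ_source s))
      (fun s => Subtype.ext (lassoSquare_of_forall_eq_constLoop hΨ_target s))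
  exact hβ_edge.trans hrefl_edge.symm

end Exactness

/-- For a topological space `X` with basepoint `p`, the maps
`j : Ω_pX → ΛX` (inclusion), `e : ΛX → X` (evaluation at the basepoint of `S¹`) and
`c : X → ΛX` (constant loops) induce a split short exact sequence of fundamental groups
`1 → π₁(Ω_pX, c_p) →j⋆ π₁(ΛX, c_p) →e⋆ π₁(X, p) → 1`:
`e⋆ ∘ c⋆ = id`, `j⋆` is injective, `e⋆` is surjective, and `ker e⋆ = im j⋆`. -/
theorem fundamentalGroup_freeLoopSpace_split_exact {X : Type} [TopologicalSpace X] (p : X) :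
    (inducedFundamentalGroupHom (loopEval X) (constLoop p)).comp
        (inducedFundamentalGroupHom (constLoopMap X) p) =
      MonoidHom.id (FundamentalGroup X p) ∧
    Function.Injective (inducedFundamentalGroupHom (loopInclusion X p) (basedConstLoop p)) ∧
    Function.Surjective (inducedFundamentalGroupHom (loopEval X) (constLoop p)) ∧
    (inducedFundamentalGroupHom (loopEval X) (constLoop p)).ker =
      (inducedFundamentalGroupHom (loopInclusion X p) (basedConstLoop p)).range := by
  have hsplit : (inducedFundamentalGroupHom (loopEval X) (constLoop p)).comp
      (inducedFundamentalGroupHom (constLoopMap X) p) = MonoidHom.id (FundamentalGroup X p) := by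
    ext g
    obtain ⟨γ, rfl⟩ := Path.Homotopic.Quotient.mk_surjective g
    rfl
  refine ⟨hsplit, (injective_iff_map_eq_one _).mpr fun b hb => ?_,
    fun g => ⟨_, DFunLike.congr_fun hsplit g⟩, ?_⟩
  · obtain ⟨β, rfl⟩ := Path.Homotopic.Quotient.mk_surjective b
    exact Path.Homotopic.Quotient.eq.mpr
      (homotopic_refl_of_map_loopInclusion_homotopic_refl (Path.Homotopic.Quotient.eq.mp hb))
  ext g
  constructor
  · intro hg
    obtain ⟨γ, rfl⟩ := Path.Homotopic.Quotient.mk_surjective g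
    obtain ⟨β, hβ⟩ := exists_map_loopInclusion_homotopic (Path.Homotopic.Quotient.eq.mp hg)
    exact ⟨.mk β, Path.Homotopic.Quotient.eq.mpr hβ⟩
  · rintro ⟨b, rfl⟩
    obtain ⟨β, rfl⟩ := Path.Homotopic.Quotient.mk_surjective b
    exact congrArg Path.Homotopic.Quotient.mk (Path.ext (funext fun t => (β t).2))
end
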